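/- arXiv:2007.12156 — 2 statements merged into one kernel-verified Lean document; each statement's English description precedes it below -/
import Mathlib

section
/- For every α in the Artin monoid A⁺ and all subsets T₁, T₂ ⊆ S, the monoid coset [α]_{T₁} is contained in [α]_{T₂} if and only if T₁ ⊆ T₂. -/
/-! Common setup for Artin monoids/groups. -/

section ArtinSetup

/-- The alternating word `s t s t ⋯` of a given length, in the free monoid. -/
def altWord {X : Type*} : X → X → ℕ → FreeMonoid X
  | _, _, 0 => 1
  | s, t, n + 1 => FreeMonoid.of s * altWord t s n

variable {S : Type} [Fintype S] (m : S → S → ℕ∞)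

/-- The braid relations: for `s ≠ t` with `m s t = n < ∞`, the two alternating words
of length `n` are related. -/
def braidRel : FreeMonoid S → FreeMonoid S → Prop := fun a b =>
  ∃ s t : S, ∃ n : ℕ, s ≠ t ∧ m s t = (n : ℕ∞) ∧ a = altWord s t n ∧ b = altWord t s n

/-- The congruence on the free monoid generated by the braid relations. -/
def artinCon : Con (FreeMonoid S) := conGen (braidRel m)

/-- The Artin monoid `A⁺` associated to the labels `m`. -/
abbrev ArtinMonoid := (artinCon m).Quotient

/-- The image of a standard generator `s ∈ S` in the Artin monoid. -/
def agen (s : S) : ArtinMonoid m := (artinCon m).mk' (FreeMonoid.of s)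

/-- The submonoid `A_T⁺` generated by a subset `T ⊆ S`. -/
def subMon (T : Set S) : Submonoid (ArtinMonoid m) :=
  Submonoid.closure (agen m '' T)

/-- The relation `α ∼_T β`: `α·t = β·t′` for some `t, t′ ∈ A_T⁺`. -/
def simRel (T : Set S) (a b : ArtinMonoid m) : Prop :=
  ∃ t ∈ subMon m T, ∃ t' ∈ subMon m T, a * t = b * t'

/-- The relation `α ≈_T β`: the transitive closure of `∼_T`. -/
def cosetRel (T : Set S) : ArtinMonoid m → ArtinMonoid m → Prop :=
  Relation.TransGen (simRel m T)

/-- The monoid coset `[α]_T`: the `≈_T`-equivalence class of `α`. -/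
def mcoset (T : Set S) (α : ArtinMonoid m) : Set (ArtinMonoid m) :=
  {β | cosetRel m T α β}

/-- The canonical monoid homomorphism from the free monoid to the free group. -/
def fmToFg {X : Type*} : FreeMonoid X →* FreeGroup X := FreeMonoid.lift FreeGroup.of

/-- The relators of the Artin group presentation. -/
def artinGroupRels : Set (FreeGroup S) :=
  {x | ∃ s t : S, ∃ n : ℕ, s ≠ t ∧ m s t = (n : ℕ∞) ∧
      x = (fmToFg (altWord s t n))⁻¹ * fmToFg (altWord t s n)}

/-- The Artin group `A` associated to the labels `m`. -/
abbrev ArtinGroup := PresentedGroup (artinGroupRels m)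

/-- The canonical homomorphism `π : A⁺ → A`. -/
def artinPi : ArtinMonoid m →* ArtinGroup m :=
  Con.lift _ ((PresentedGroup.mk (artinGroupRels m)).comp fmToFg)
    (Con.conGen_le.mpr (fun a b hab => by
      obtain ⟨s, t, n, hst, hmn, ha, hb⟩ := hab
      subst ha; subst hb
      have : ((fmToFg (altWord s t n))⁻¹ * fmToFg (altWord t s n) :
          FreeGroup S) ∈ Subgroup.normalClosure (artinGroupRels m) :=
        Subgroup.subset_normalClosure ⟨s, t, n, hst, hmn, rfl⟩
      simp only [Con.ker_rel, MonoidHom.comp_apply]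
      exact (QuotientGroup.eq (s := Subgroup.normalClosure (artinGroupRels m))).mpr this))

/-- The subgroup `A_T` of the Artin group generated by the images of `T ⊆ S`. -/
def subGrp (T : Set S) : Subgroup (ArtinGroup m) :=
  Subgroup.closure ((PresentedGroup.of (rels := artinGroupRels m)) '' T)

/-- The relators of the Coxeter group presentation on generators `T ⊆ S`:
the squares of the generators, together with the braid relators. -/
def coxRels (T : Set S) : Set (FreeGroup T) :=
  {x | ∃ s : T, x = FreeGroup.of s * FreeGroup.of s} ∪
  {x | ∃ s t : T, ∃ n : ℕ, (s : S) ≠ (t : S) ∧ m s t = (n : ℕ∞) ∧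
      x = (fmToFg (altWord s t n))⁻¹ * fmToFg (altWord t s n)}

/-- `T ⊆ S` is of finite type if the Coxeter group `W_T` is finite. -/
def FiniteType (T : Set S) : Prop := Finite (PresentedGroup (coxRels m T))

end ArtinSetup

/-!
If `s ∈ T₁ \ T₂`, then `α s ∈ [α]_{T₁}`, and `α s ∉ [α]_{T₂}` is detected by Tits' geometric
representation `s ↦ σ_s ∈ GL(ℝ^S)`, `σ_s v = v - 2 B(e_s, v) e_s` with
`B(e_s, e_t) = -cos (π / m_{s,t})`. A relation `α t = β t'` with `t, t' ∈ A_{T₂}⁺` puts the images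
of `α` and `β` in one left coset of the subgroup fixing the `s`-th coordinate; that subgroup
contains `σ_t` for all `t ≠ s` but not `σ_s`, as `σ_s e_s = -e_s`. The braid relations hold because
`σ_s σ_t` rotates the plane spanned by `e_s, e_t` by `2π / m_{s,t}` and fixes its `B`-orthogonal
complement.
-/

open Real

section AlternatingWords

variable {X G : Type*} [Group G] (f : X → G)

theorem lift_altWord_mul_inv {s t : X} (hs : f s * f s = 1) (ht : f t * f t = 1) (n : ℕ) :
    FreeMonoid.lift f (altWord s t n) * (FreeMonoid.lift f (altWord t s n))⁻¹ =
      (f s * f t) ^ n := by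
  induction n generalizing s t with
  | zero => simp [altWord]
  | succ n ih =>
    simp only [altWord, map_mul, FreeMonoid.lift_eval_of, mul_inv_rev,
      inv_eq_of_mul_eq_one_right ht]
    calc f s * FreeMonoid.lift f (altWord t s n) * ((FreeMonoid.lift f (altWord s t n))⁻¹ * f t)
        = f s * (FreeMonoid.lift f (altWord t s n) * (FreeMonoid.lift f (altWord s t n))⁻¹) *
            f t := by group
      _ = (f s * f t) ^ (n + 1) := by rw [ih ht hs, ← mul_pow_mul, mul_assoc, ← pow_succ]

theorem lift_altWord_eq_of_pow_eq_one {s t : X} (hs : f s * f s = 1) (ht : f t * f t = 1)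
    {n : ℕ} (h : (f s * f t) ^ n = 1) :
    FreeMonoid.lift f (altWord s t n) = FreeMonoid.lift f (altWord t s n) :=
  mul_inv_eq_one.mp ((lift_altWord_mul_inv f hs ht n).trans h)

end AlternatingWords

section TitsRepresentation

variable {S : Type*} [DecidableEq S] {m : S → S → ℕ∞}

variable (m) in
/-- For `m s t = ∞` the junk value `π / 0 = 0` gives Tits' coefficient `-1`. -/
noncomputable def coxeterCoeff (s t : S) : ℝ :=
  if s = t then 1 else -cos (π / (m s t).toNat)

theorem coxeterCoeff_self (s : S) : coxeterCoeff m s s = 1 := if_pos rfl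

theorem coxeterCoeff_of_ne {s t : S} (hst : s ≠ t) {n : ℕ} (hn : m s t = n) :
    coxeterCoeff m s t = -cos (π / n) := by
  rw [coxeterCoeff, if_neg hst, hn, ENat.toNat_natCast]

variable [Fintype S]

variable (m) in
noncomputable def coxeterFunctional (s : S) : (S → ℝ) →ₗ[ℝ] ℝ :=
  Fintype.linearCombination ℝ (coxeterCoeff m s)

variable (m) in
noncomputable def reflection (s : S) : Module.End ℝ (S → ℝ) :=
  LinearMap.id - (2 • coxeterFunctional m s).smulRight (Pi.single s 1)

theorem coxeterFunctional_single (s t : S) :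
    coxeterFunctional m s (Pi.single t 1) = coxeterCoeff m s t := by
  simp [coxeterFunctional, Fintype.linearCombination_apply_single]

theorem reflection_apply (s : S) (v : S → ℝ) :
    reflection m s v = v - (2 * coxeterFunctional m s v) • Pi.single s 1 := by
  simp [reflection, LinearMap.smulRight_apply]

theorem coxeterFunctional_reflection (s : S) (v : S → ℝ) :
    coxeterFunctional m s (reflection m s v) = -coxeterFunctional m s v := by
  rw [reflection_apply, map_sub, map_smul, coxeterFunctional_single, coxeterCoeff_self]
  simp only [smul_eq_mul]
  ring

theorem reflection_mul_self (s : S) : reflection m s * reflection m s = 1 := by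
  refine LinearMap.ext fun v => ?_
  rw [Module.End.mul_apply, reflection_apply, coxeterFunctional_reflection, reflection_apply]
  module

theorem reflection_single_self (s : S) :
    reflection m s (Pi.single s 1) = -Pi.single s 1 := by
  rw [reflection_apply, coxeterFunctional_single, coxeterCoeff_self]
  module

theorem reflection_apply_of_coxeterFunctional_eq_zero {s : S} {v : S → ℝ}
    (h : coxeterFunctional m s v = 0) : reflection m s v = v := by
  simp [reflection_apply, h]

theorem reflection_apply_apply_of_ne {s t : S} (hts : t ≠ s) (v : S → ℝ) :
    reflection m t v s = v s := by
  simp [reflection_apply, hts.symm]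

-- `2 cos θ sin ψ = sin (ψ + θ) + sin (ψ - θ)`
theorem reflection_sin_smul_add {s t : S} {θ : ℝ}
    (hc : coxeterCoeff m s t = -cos θ) (ψ : ℝ) :
    reflection m s (sin (ψ + θ) • Pi.single s 1 + sin ψ • Pi.single t 1) =
      sin (ψ - θ) • Pi.single s 1 + sin ψ • Pi.single t 1 := by
  rw [reflection_apply, map_add, map_smul, map_smul, coxeterFunctional_single,
    coxeterFunctional_single, coxeterCoeff_self, hc, sin_sub, sin_add]
  module

theorem reflection_mul_reflection_sin_smul_add {s t : S} {θ : ℝ}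
    (hs : coxeterCoeff m s t = -cos θ) (ht : coxeterCoeff m t s = -cos θ) (φ : ℝ) :
    (reflection m s * reflection m t) (sin φ • Pi.single s 1 + sin (φ - θ) • Pi.single t 1) =
      sin (φ + 2 * θ) • Pi.single s 1 + sin (φ + θ) • Pi.single t 1 := by
  have hs' : coxeterCoeff m s t = -cos (-θ) := by rwa [cos_neg]
  have ht' : coxeterCoeff m t s = -cos (-θ) := by rwa [cos_neg]
  have h₁ := reflection_sin_smul_add ht' φ
  have h₂ := reflection_sin_smul_add hs' (φ + θ)
  simp only [← sub_eq_add_neg, sub_neg_eq_add, add_sub_cancel_right] at h₁ h₂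
  rw [Module.End.mul_apply, add_comm, h₁, add_comm, h₂, add_assoc, ← two_mul]

theorem pow_reflection_mul_reflection_sin_smul_add {s t : S} {θ : ℝ}
    (hs : coxeterCoeff m s t = -cos θ) (ht : coxeterCoeff m t s = -cos θ) (k : ℕ) (φ : ℝ) :
    ((reflection m s * reflection m t) ^ k)
        (sin φ • Pi.single s 1 + sin (φ - θ) • Pi.single t 1) =
      sin (φ + 2 * k * θ) • Pi.single s 1 + sin (φ + 2 * k * θ - θ) • Pi.single t 1 := by
  induction k generalizing φ with
  | zero => simp
  | succ k ih =>
    rw [pow_succ, Module.End.mul_apply, reflection_mul_reflection_sin_smul_add hs ht,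
      show φ + θ = φ + 2 * θ - θ by ring, ih]
    push_cast
    ring_nf

theorem pow_reflection_mul_reflection_single {s t : S} {θ : ℝ}
    (hs : coxeterCoeff m s t = -cos θ) (ht : coxeterCoeff m t s = -cos θ) {n : ℕ}
    (hn : n * θ = π) (hθ : sin θ ≠ 0) :
    ((reflection m s * reflection m t) ^ n) (Pi.single s 1) = Pi.single s 1 ∧
      ((reflection m s * reflection m t) ^ n) (Pi.single t 1) = Pi.single t 1 := by
  have h2nθ : 2 * n * θ = 2 * π := by rw [mul_assoc, hn]
  have hθs := pow_reflection_mul_reflection_sin_smul_add hs ht n θ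
  have h0t := pow_reflection_mul_reflection_sin_smul_add hs ht n 0
  simp only [sub_self, sin_zero, zero_smul, add_zero, zero_add, zero_sub, sin_neg, h2nθ,
    sin_two_pi, add_sub_cancel_left, sin_add_two_pi, map_smul] at hθs h0t
  rw [sub_eq_neg_add, sin_add_two_pi, sin_neg, neg_smul, neg_smul, neg_inj] at h0t
  exact ⟨smul_right_injective _ hθ hθs, smul_right_injective _ hθ h0t⟩

theorem exists_eq_smul_add_smul_add {s t : S} {c : ℝ} (hs : coxeterCoeff m s t = c)
    (ht : coxeterCoeff m t s = c) (hc : c ^ 2 ≠ 1) (v : S → ℝ) :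
    ∃ x y : ℝ, ∃ w : S → ℝ, coxeterFunctional m s w = 0 ∧ coxeterFunctional m t w = 0 ∧
      v = x • Pi.single s 1 + y • Pi.single t 1 + w := by
  have hd : 1 - c ^ 2 ≠ 0 := sub_ne_zero.mpr hc.symm
  set a := coxeterFunctional m s v
  set b := coxeterFunctional m t v
  refine ⟨(a - c * b) / (1 - c ^ 2), (b - c * a) / (1 - c ^ 2),
    v - ((a - c * b) / (1 - c ^ 2)) • Pi.single s 1 - ((b - c * a) / (1 - c ^ 2)) • Pi.single t 1,
    ?_, ?_, by abel⟩ <;>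
  · simp only [map_sub, map_smul, coxeterFunctional_single, coxeterCoeff_self, hs, ht,
      smul_eq_mul]
    field_simp
    ring

theorem reflection_mul_reflection_pow_eq_one {s t : S} {n : ℕ} (hn : 2 ≤ n)
    (hs : coxeterCoeff m s t = -cos (π / n)) (ht : coxeterCoeff m t s = -cos (π / n)) :
    (reflection m s * reflection m t) ^ n = 1 := by
  have hn₀ : (0 : ℝ) < n := by positivity
  have hθ : sin (π / n) ≠ 0 := by
    refine (sin_pos_of_pos_of_lt_pi (by positivity) ?_).ne'
    rw [div_lt_iff₀ hn₀]
    nlinarith [pi_pos, (Nat.ofNat_le_cast.mpr hn : (2 : ℝ) ≤ n)]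
  have hc : (-cos (π / n)) ^ 2 ≠ 1 := by
    rw [neg_sq, ← sin_sq_add_cos_sq (π / n), ne_eq, right_eq_add]
    exact pow_ne_zero 2 hθ
  obtain ⟨hes, het⟩ := pow_reflection_mul_reflection_single hs ht
    (mul_div_cancel₀ π hn₀.ne') hθ
  refine LinearMap.ext fun v => ?_
  obtain ⟨x, y, w, hws, hwt, rfl⟩ := exists_eq_smul_add_smul_add hs ht hc v
  have hw : (reflection m s * reflection m t) w = w := by
    rw [Module.End.mul_apply, reflection_apply_of_coxeterFunctional_eq_zero hwt,
      reflection_apply_of_coxeterFunctional_eq_zero hws]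
  rw [map_add, map_add, map_smul, map_smul, hes, het, Module.End.pow_apply,
    Function.iterate_fixed hw, Module.End.one_apply]

end TitsRepresentation

section Cosets

variable {S : Type} {m : S → S → ℕ∞}

theorem subMon_mono {T₁ T₂ : Set S} (h : T₁ ⊆ T₂) : subMon m T₁ ≤ subMon m T₂ :=
  Submonoid.closure_mono (Set.image_mono h)

theorem simRel_mono {T₁ T₂ : Set S} (h : T₁ ⊆ T₂) : simRel m T₁ ≤ simRel m T₂ :=
  fun _ _ ⟨t, ht, t', ht', he⟩ => ⟨t, subMon_mono h ht, t', subMon_mono h ht', he⟩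

theorem mcoset_mono {T₁ T₂ : Set S} (h : T₁ ⊆ T₂) (α : ArtinMonoid m) :
    mcoset m T₁ α ⊆ mcoset m T₂ α :=
  Relation.TransGen.mono (simRel_mono h) α

theorem mul_agen_mem_mcoset {T : Set S} {s : S} (hs : s ∈ T) (α : ArtinMonoid m) :
    α * agen m s ∈ mcoset m T α :=
  .single ⟨agen m s, Submonoid.subset_closure ⟨s, hs, rfl⟩, 1, one_mem _, (mul_one _).symm⟩

theorem map_subMon_le {M : Type*} [Monoid M] (φ : ArtinMonoid m →* M) {T : Set S}
    {Q : Submonoid M} (hT : ∀ t ∈ T, φ (agen m t) ∈ Q) : (subMon m T).map φ ≤ Q := by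
  rw [subMon, MonoidHom.map_mclosure, Submonoid.closure_le]
  rintro _ ⟨_, ⟨t, ht, rfl⟩, rfl⟩
  exact hT t ht

theorem mk_map_eq_of_cosetRel {G : Type*} [Group G] (φ : ArtinMonoid m →* G) {T : Set S}
    {Q : Subgroup G} (hT : ∀ t ∈ T, φ (agen m t) ∈ Q) {α β : ArtinMonoid m}
    (h : cosetRel m T α β) : (φ α : G ⧸ Q) = φ β := by
  have hQ : ∀ u ∈ subMon m T, φ u ∈ Q := fun u hu =>
    map_subMon_le φ (Q := Q.toSubmonoid) hT ⟨u, hu, rfl⟩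
  have hsim : ∀ {a b}, simRel m T a b → (φ a : G ⧸ Q) = φ b := by
    rintro a b ⟨t, ht, t', ht', he⟩
    rw [← QuotientGroup.mk_mul_of_mem _ (hQ t ht), ← map_mul, he, map_mul,
      QuotientGroup.mk_mul_of_mem _ (hQ t' ht')]
  induction h with
  | single h => exact hsim h
  | tail _ h ih => exact ih.trans (hsim h)

end Cosets

section ArtinRepresentation

def coordStabilizer {ι R : Type*} [Semiring R] (i : ι) : Subgroup (Module.End R (ι → R))ˣ where
  carrier := {g | ∀ v, (g : Module.End R (ι → R)) v i = v i}
  one_mem' _ := rfl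
  mul_mem' ha hb v := (ha _).trans (hb v)
  inv_mem' {g} hg v := by
    have h := hg (((g⁻¹ : (Module.End R (ι → R))ˣ) : Module.End R (ι → R)) v)
    rwa [← Module.End.mul_apply, Units.mul_inv, Module.End.one_apply, eq_comm] at h

variable {S : Type} [Fintype S] [DecidableEq S] {m : S → S → ℕ∞}

variable (m) in
noncomputable def reflectionUnit (s : S) : (Module.End ℝ (S → ℝ))ˣ :=
  ⟨reflection m s, reflection m s, reflection_mul_self s, reflection_mul_self s⟩

theorem reflectionUnit_mem_coordStabilizer {s t : S} (hts : t ≠ s) :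
    reflectionUnit m t ∈ coordStabilizer s :=
  reflection_apply_apply_of_ne hts

theorem reflectionUnit_notMem_coordStabilizer (s : S) :
    reflectionUnit m s ∉ coordStabilizer s := fun h => by
  have h₁ := h (Pi.single s 1)
  rw [reflectionUnit, Units.val_mk, reflection_single_self] at h₁
  norm_num at h₁

theorem reflectionUnit_mul_pow_eq_one (hsymm : ∀ s t : S, m s t = m t s)
    (hge : ∀ s t : S, s ≠ t → 2 ≤ m s t) {s t : S} (hst : s ≠ t) {n : ℕ} (hn : m s t = n) :
    (reflectionUnit m s * reflectionUnit m t) ^ n = 1 := by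
  have h2 : 2 ≤ n := by exact_mod_cast hn ▸ hge s t hst
  ext1
  rw [Units.val_pow_eq_pow_val, Units.val_mul]
  exact reflection_mul_reflection_pow_eq_one h2 (coxeterCoeff_of_ne hst hn)
    (coxeterCoeff_of_ne hst.symm ((hsymm t s).trans hn))

variable (m) in
noncomputable def titsRep (hsymm : ∀ s t : S, m s t = m t s)
    (hge : ∀ s t : S, s ≠ t → 2 ≤ m s t) : ArtinMonoid m →* (Module.End ℝ (S → ℝ))ˣ :=
  (artinCon m).lift (FreeMonoid.lift (reflectionUnit m)) <|
    Con.conGen_le.mpr fun _ _ ⟨s, t, _, hst, hn, ha, hb⟩ => by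
      subst ha hb
      exact lift_altWord_eq_of_pow_eq_one _ (Units.ext (reflection_mul_self s))
        (Units.ext (reflection_mul_self t)) (reflectionUnit_mul_pow_eq_one hsymm hge hst hn)

theorem titsRep_agen (hsymm : ∀ s t : S, m s t = m t s)
    (hge : ∀ s t : S, s ≠ t → 2 ≤ m s t) (s : S) :
    titsRep m hsymm hge (agen m s) = reflectionUnit m s :=
  rfl

end ArtinRepresentation

/-- `[α]_T₁ ⊆ [α]_T₂ ↔ T₁ ⊆ T₂`. -/
theorem artin_coset_subset_iff {S : Type} [Fintype S] (m : S → S → ℕ∞)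
    (hsymm : ∀ s t : S, m s t = m t s) (hge : ∀ s t : S, s ≠ t → 2 ≤ m s t)
    (α : ArtinMonoid m) (T₁ T₂ : Set S) :
    mcoset m T₁ α ⊆ mcoset m T₂ α ↔ T₁ ⊆ T₂ := by
  classical
  refine ⟨fun h s hs₁ => ?_, fun h => mcoset_mono h α⟩
  by_contra hs₂
  have hT₂ : ∀ t ∈ T₂, titsRep m hsymm hge (agen m t) ∈ coordStabilizer s := fun t ht =>
    reflectionUnit_mem_coordStabilizer fun hts => hs₂ (hts ▸ ht)
  have hαs := mk_map_eq_of_cosetRel _ hT₂ (h (mul_agen_mem_mcoset hs₁ α))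
  rw [QuotientGroup.eq, map_mul, inv_mul_cancel_left, titsRep_agen] at hαs
  exact reflectionUnit_notMem_coordStabilizer s hαs
end

section
/- Let γ be an element of the Artin monoid A⁺ and T₁, T₂ ⊆ S. For i = 1,2 suppose d_i ∈ A_{T_i}⁺ is a right divisor of γ such that every right divisor of γ lying in A_{T_i}⁺ right-divides d_i, and suppose g ∈ A⁺ is a common right divisor of d₁ and d₂ such that every common right divisor of d₁ and d₂ right-divides g. Then g lies in A_{T₁∩T₂}⁺, g right-divides γ, and every right divisor of γ lying in A_{T₁∩T₂}⁺ right-divides g. -/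
/-! Since every braid relation has length at least two, both of its sides use the same
letters, so the set of letters of a word is an invariant of the element of `A⁺` it represents.
Hence `a ∈ A_T⁺` exactly when the letters of `a` lie in `T`: the submonoids `A_T⁺` are closed
under taking right divisors and `A_{T₁ ∩ T₂}⁺ = A_{T₁}⁺ ∩ A_{T₂}⁺`. So `g`, a right divisor of
`d₁` and `d₂`, lies in `A_{T₁ ∩ T₂}⁺`, and a right divisor of `γ` in `A_{T₁ ∩ T₂}⁺` divides both
`d_i`, hence `g`. -/

section Letters

variable {X : Type*}

lemma mem_altWord {s t x : X} : ∀ {n : ℕ}, x ∈ altWord s t n → x = s ∨ x = t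
  | 0, h => absurd h FreeMonoid.notMem_one
  | n + 1, h => by
    rcases FreeMonoid.mem_mul.mp h with h | h
    · exact Or.inl (FreeMonoid.mem_of.mp h)
    · exact (mem_altWord h).symm

lemma mem_altWord_add_two {s t x : X} {n : ℕ} :
    x ∈ altWord s t (n + 2) ↔ x = s ∨ x = t := by
  refine ⟨mem_altWord, ?_⟩
  rintro (rfl | rfl)
  · exact FreeMonoid.mem_mul.mpr (Or.inl FreeMonoid.mem_of_self)
  · exact FreeMonoid.mem_mul.mpr (Or.inr (FreeMonoid.mem_mul.mpr (Or.inl FreeMonoid.mem_of_self)))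

variable (X) in
def sameLettersCon : Con (FreeMonoid X) where
  r a b := ∀ x, x ∈ a ↔ x ∈ b
  iseqv := ⟨fun _ _ => Iff.rfl, fun h x => (h x).symm, fun h₁ h₂ x => (h₁ x).trans (h₂ x)⟩
  mul' h₁ h₂ x := by simp only [FreeMonoid.mem_mul, h₁ x, h₂ x]

end Letters

namespace ArtinMonoid

variable {S : Type} {m : S → S → ℕ∞} (hm : ∀ s t : S, s ≠ t → 2 ≤ m s t)
include hm

lemma artinCon_le_sameLettersCon : artinCon m ≤ sameLettersCon S := by
  refine Con.conGen_le.mpr ?_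
  rintro _ _ ⟨s, t, n, hst, hmn, rfl, rfl⟩ x
  obtain ⟨k, rfl⟩ : ∃ k, n = k + 2 :=
    ⟨n - 2, by have := hm s t hst; rw [hmn] at this; norm_cast at this; omega⟩
  rw [mem_altWord_add_two, mem_altWord_add_two, or_comm]

def letters (a : ArtinMonoid m) : Set S :=
  (artinCon m).liftOn a (fun w => {x | x ∈ w})
    fun _ _ h => Set.ext (artinCon_le_sameLettersCon hm h)

lemma letters_mul (a b : ArtinMonoid m) :
    letters hm (a * b) = letters hm a ∪ letters hm b :=
  Con.induction_on₂ a b fun _ _ => Set.ext fun _ => FreeMonoid.mem_mul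

lemma mem_subMon_iff_letters_subset {T : Set S} {a : ArtinMonoid m} :
    a ∈ subMon m T ↔ letters hm a ⊆ T := by
  constructor
  · intro ha
    induction ha using Submonoid.closure_induction with
    | mem _ hx =>
      obtain ⟨s, hs, rfl⟩ := hx
      exact fun x hx => (FreeMonoid.mem_of.mp hx) ▸ hs
    | one => exact fun _ hx => absurd hx FreeMonoid.notMem_one
    | mul x y _ _ hx hy => exact (letters_mul hm x y).symm ▸ Set.union_subset hx hy
  · induction a using Con.induction_on with | H w => ?_
    induction w using FreeMonoid.inductionOn with
    | one => exact fun _ => Submonoid.one_mem _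
    | of s => exact fun hs => Submonoid.subset_closure ⟨s, hs FreeMonoid.mem_of_self, rfl⟩
    | mul x y hx hy =>
      intro hxy
      rw [Con.coe_mul, letters_mul, Set.union_subset_iff] at hxy
      exact Submonoid.mul_mem _ (hx hxy.1) (hy hxy.2)

lemma mem_subMon_of_mul_mem_right {T : Set S} {c g : ArtinMonoid m} (h : c * g ∈ subMon m T) :
    g ∈ subMon m T := by
  rw [mem_subMon_iff_letters_subset hm, letters_mul, Set.union_subset_iff] at h
  exact (mem_subMon_iff_letters_subset hm).mpr h.2

lemma subMon_inter (T₁ T₂ : Set S) : subMon m (T₁ ∩ T₂) = subMon m T₁ ⊓ subMon m T₂ := by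
  ext a
  simp only [Submonoid.mem_inf, mem_subMon_iff_letters_subset hm, Set.subset_inter_iff]

end ArtinMonoid

theorem artin_greatest_right_divisor_inter_general {S : Type} (m : S → S → ℕ∞)
    (hge : ∀ s t : S, s ≠ t → 2 ≤ m s t)
    (γ d₁ d₂ g : ArtinMonoid m) (T₁ T₂ : Set S)
    (hd₁mem : d₁ ∈ subMon m T₁) (hd₂mem : d₂ ∈ subMon m T₂)
    (hd₁dvd : ∃ c, γ = c * d₁)
    (hd₁max : ∀ x ∈ subMon m T₁, (∃ c, γ = c * x) → ∃ c, d₁ = c * x)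
    (hd₂max : ∀ x ∈ subMon m T₂, (∃ c, γ = c * x) → ∃ c, d₂ = c * x)
    (hg₁ : ∃ c, d₁ = c * g) (hg₂ : ∃ c, d₂ = c * g)
    (hgmax : ∀ x : ArtinMonoid m, (∃ c, d₁ = c * x) → (∃ c, d₂ = c * x) →
      ∃ c, g = c * x) :
    g ∈ subMon m (T₁ ∩ T₂) ∧ (∃ c, γ = c * g) ∧
      ∀ x ∈ subMon m (T₁ ∩ T₂), (∃ c, γ = c * x) → ∃ c, g = c * x := by
  obtain ⟨c₁, hc₁⟩ := hg₁
  obtain ⟨c₂, hc₂⟩ := hg₂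
  have hgT₁ : g ∈ subMon m T₁ := ArtinMonoid.mem_subMon_of_mul_mem_right hge (hc₁ ▸ hd₁mem)
  have hgT₂ : g ∈ subMon m T₂ := ArtinMonoid.mem_subMon_of_mul_mem_right hge (hc₂ ▸ hd₂mem)
  obtain ⟨c, hc⟩ := hd₁dvd
  rw [ArtinMonoid.subMon_inter hge]
  exact ⟨⟨hgT₁, hgT₂⟩, ⟨c * c₁, by rw [hc, hc₁, mul_assoc]⟩,
    fun x hx hxγ => hgmax x (hd₁max x hx.1 hxγ) (hd₂max x hx.2 hxγ)⟩

/-- if `d_i` is the greatest right divisor of `γ` lying in `A_(T_i)⁺` and `g` is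
the greatest common right divisor of `d₁, d₂`, then `g ∈ A_(T₁∩T₂)⁺`, `g` right-divides `γ`,
and `g` is the greatest right divisor of `γ` lying in `A_(T₁∩T₂)⁺`. -/
theorem artin_greatest_right_divisor_inter {S : Type} [Fintype S] (m : S → S → ℕ∞)
    (hsymm : ∀ s t : S, m s t = m t s) (hge : ∀ s t : S, s ≠ t → 2 ≤ m s t)
    (γ d₁ d₂ g : ArtinMonoid m) (T₁ T₂ : Set S)
    (hd₁mem : d₁ ∈ subMon m T₁) (hd₂mem : d₂ ∈ subMon m T₂)
    (hd₁dvd : ∃ c, γ = c * d₁) (hd₂dvd : ∃ c, γ = c * d₂)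
    (hd₁max : ∀ x ∈ subMon m T₁, (∃ c, γ = c * x) → ∃ c, d₁ = c * x)
    (hd₂max : ∀ x ∈ subMon m T₂, (∃ c, γ = c * x) → ∃ c, d₂ = c * x)
    (hg₁ : ∃ c, d₁ = c * g) (hg₂ : ∃ c, d₂ = c * g)
    (hgmax : ∀ x : ArtinMonoid m, (∃ c, d₁ = c * x) → (∃ c, d₂ = c * x) →
      ∃ c, g = c * x) :
    g ∈ subMon m (T₁ ∩ T₂) ∧ (∃ c, γ = c * g) ∧
      ∀ x ∈ subMon m (T₁ ∩ T₂), (∃ c, γ = c * x) → ∃ c, g = c * x :=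
  artin_greatest_right_divisor_inter_general m hge γ d₁ d₂ g T₁ T₂ hd₁mem hd₂mem hd₁dvd hd₁max
    hd₂max hg₁ hg₂ hgmax
end
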